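/- arXiv:1205.2171 — 6 statements merged into one kernel-verified Lean document; each statement's English description precedes it below -/
import Mathlib

section
/- Let H be a real Hilbert space, w_1, …, w_n ∈ H with Gram matrix k (k_{ij} = ⟨w_i, w_j⟩), let Ĉ_XX be the empirical covariance operator associated with w_1, …, w_n, and let ε > 0. Then the matrix k + nε·I_n is invertible, the operator Ĉ_XX + ε·Id is bijective on H, and for every c ∈ ℝ^n one has (Ĉ_XX + ε·Id)^{-1}(Σ_{j=1}^n c_j w_j) = Σ_{j=1}^n d_j w_j, where d = n (k + nε·I_n)^{-1} c. -/
/-!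
Writing `F φ = ∑ₚ ⟪w p, φ⟫ • w p`, the operator `T = n⁻¹ F + ε` maps `∑ⱼ dⱼ wⱼ` to
`∑ⱼ (n⁻¹ (k + nε) d)ⱼ wⱼ`, so on the span of the `wⱼ` it is inverted by the (positive definite)
matrix `n (k + nε)⁻¹`. Injectivity on all of `H` follows from `⟪T φ, φ⟫ ≥ ε ‖φ‖²`. Surjectivity
needs no completeness: `ε ψ = T ψ - n⁻¹ F ψ` and `F ψ` lies in the span of the `wⱼ`, which is
contained in the range of `T`.
-/

open scoped RealInnerProductSpace

open Matrix

section Frame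

variable {ι H : Type*} [Fintype ι] [NormedAddCommGroup H] [InnerProductSpace ℝ H]

noncomputable def frameOperator (w : ι → H) : H →ₗ[ℝ] H :=
  Fintype.linearCombination ℝ w ∘ₗ LinearMap.pi fun p => innerₛₗ ℝ (w p)

theorem frameOperator_apply (w : ι → H) (φ : H) :
    frameOperator w φ = ∑ p, ⟪w p, φ⟫ • w p := by
  simp [frameOperator, Fintype.linearCombination_apply]

theorem inner_sum_smul_eq_gram_mulVec (w : ι → H) (d : ι → ℝ) (p : ι) :
    ⟪w p, ∑ j, d j • w j⟫ = (gram ℝ w *ᵥ d) p := by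
  simp [inner_sum, real_inner_smul_right, mulVec, dotProduct, mul_comm]

theorem frameOperator_sum_smul (w : ι → H) (d : ι → ℝ) :
    frameOperator w (∑ j, d j • w j) = ∑ j, (gram ℝ w *ᵥ d) j • w j := by
  simp only [frameOperator_apply, inner_sum_smul_eq_gram_mulVec]

theorem inner_frameOperator_self_nonneg (w : ι → H) (φ : H) :
    0 ≤ ⟪frameOperator w φ, φ⟫ := by
  simp only [frameOperator_apply, sum_inner, real_inner_smul_left]
  exact Finset.sum_nonneg fun p _ => mul_self_nonneg _

theorem posDef_gram_add_smul_one [DecidableEq ι] (w : ι → H) {c : ℝ} (hc : 0 < c) :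
    (gram ℝ w + c • (1 : Matrix ι ι ℝ)).PosDef :=
  PosDef.posSemidef_add (posSemidef_gram ℝ w) (PosDef.one.smul hc)

theorem smul_frameOperator_add_smul_id_sum_smul [DecidableEq ι] (w : ι → H) {t : ℝ} (ht : t ≠ 0)
    (ε : ℝ) (d : ι → ℝ) :
    (t⁻¹ • frameOperator w + ε • LinearMap.id : H →ₗ[ℝ] H) (∑ j, d j • w j)
      = ∑ j, (t⁻¹ • ((gram ℝ w + (t * ε) • 1) *ᵥ d)) j • w j := by
  simp only [LinearMap.add_apply, LinearMap.smul_apply, frameOperator_sum_smul, LinearMap.id_apply,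
    Finset.smul_sum, smul_smul, ← Finset.sum_add_distrib, ← add_smul, add_mulVec, smul_mulVec,
    one_mulVec, Pi.smul_apply, Pi.add_apply, smul_eq_mul]
  congr! 2
  field_simp

theorem smul_frameOperator_add_smul_id_sum_smul_inv_mulVec [DecidableEq ι] (w : ι → H) {t ε : ℝ}
    (ht : t ≠ 0) (hA : IsUnit (gram ℝ w + (t * ε) • (1 : Matrix ι ι ℝ))) (c : ι → ℝ) :
    (t⁻¹ • frameOperator w + ε • LinearMap.id : H →ₗ[ℝ] H)
      (∑ j, (t * (gram ℝ w + (t * ε) • 1)⁻¹.mulVec c j) • w j) = ∑ j, c j • w j := by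
  set A := gram ℝ w + (t * ε) • (1 : Matrix ι ι ℝ)
  have hc : t⁻¹ • (A *ᵥ (t • A⁻¹ *ᵥ c)) = c := by
    rw [mulVec_smul, smul_smul, inv_mul_cancel₀ ht, one_smul, mulVec_mulVec,
      mul_nonsing_inv _ ((isUnit_iff_isUnit_det _).mp hA), one_mulVec]
  have h := smul_frameOperator_add_smul_id_sum_smul w ht ε (t • A⁻¹ *ᵥ c)
  rwa [hc] at h

theorem range_frameOperator_le_span (w : ι → H) :
    LinearMap.range (frameOperator w) ≤ Submodule.span ℝ (Set.range w) :=
  Fintype.range_linearCombination ℝ w ▸ LinearMap.range_comp_le_range _ _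

end Frame

section Regularized

variable {H : Type*} [NormedAddCommGroup H] [InnerProductSpace ℝ H]

theorem injective_add_smul_id_of_inner_self_nonneg (P : H →ₗ[ℝ] H) (hP : ∀ φ, 0 ≤ ⟪P φ, φ⟫)
    {ε : ℝ} (hε : 0 < ε) : Function.Injective (P + ε • LinearMap.id : H →ₗ[ℝ] H) := by
  rw [← LinearMap.ker_eq_bot, LinearMap.ker_eq_bot']
  intro φ hφ
  have h : ⟪P φ, φ⟫ + ε * ‖φ‖ ^ 2 = 0 := by
    simpa [inner_add_left, real_inner_smul_left, real_inner_self_eq_norm_sq] using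
      congrArg (⟪·, φ⟫) hφ
  have : ‖φ‖ ^ 2 = 0 := by nlinarith [hP φ, sq_nonneg ‖φ‖]
  simpa using this

theorem surjective_add_smul_id_of_range_le (P : H →ₗ[ℝ] H) {ε : ℝ} (hε : ε ≠ 0)
    (hP : LinearMap.range P ≤ LinearMap.range (P + ε • LinearMap.id : H →ₗ[ℝ] H)) :
    Function.Surjective (P + ε • LinearMap.id : H →ₗ[ℝ] H) := by
  rw [← LinearMap.range_eq_top, eq_top_iff]
  intro ψ _
  have h : ε • ψ = (P + ε • LinearMap.id : H →ₗ[ℝ] H) ψ - P ψ := by simp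
  have hmem : ε • ψ ∈ LinearMap.range (P + ε • LinearMap.id : H →ₗ[ℝ] H) :=
    h ▸ sub_mem (LinearMap.mem_range_self _ ψ) (hP (LinearMap.mem_range_self P ψ))
  simpa [hε] using Submodule.smul_mem _ ε⁻¹ hmem

end Regularized

/-- With Gram matrix `k` of `w₁, …, wₙ` and `ε > 0`, the matrix
`k + nε Iₙ` is invertible, the regularized empirical covariance operator
`Ĉ_XX + ε Id` is bijective on `H`, and its inverse maps `Σⱼ cⱼ wⱼ` to `Σⱼ dⱼ wⱼ`
with `d = n (k + nε Iₙ)⁻¹ c`. -/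
theorem regularized_covariance_inverse_on_span
    {H : Type*} [NormedAddCommGroup H] [InnerProductSpace ℝ H]
    (n : ℕ) (hn : 0 < n) (w : Fin n → H)
    (k : Matrix (Fin n) (Fin n) ℝ) (hk : ∀ i j, k i j = ⟪w i, w j⟫)
    (ε : ℝ) (hε : 0 < ε)
    (C : H → H)
    (hC : ∀ φ : H, C φ = (1 / (n : ℝ)) • ∑ p, ⟪w p, φ⟫ • w p) :
    IsUnit (k + ((n : ℝ) * ε) • (1 : Matrix (Fin n) (Fin n) ℝ)) ∧
    Function.Bijective (fun φ : H => C φ + ε • φ) ∧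
    ∀ c : Fin n → ℝ,
      (fun φ : H => C φ + ε • φ)
          (∑ j, ((n : ℝ) * (k + ((n : ℝ) * ε) • 1)⁻¹.mulVec c j) • w j)
        = ∑ j, c j • w j := by
  obtain rfl : k = gram ℝ w := Matrix.ext hk
  have hn' : (n : ℝ) ≠ 0 := by positivity
  set T : H →ₗ[ℝ] H := (n : ℝ)⁻¹ • frameOperator w + ε • LinearMap.id
  have hT : (fun φ : H => C φ + ε • φ) = T := by
    funext φ
    simp [T, hC, frameOperator_apply]
  have hA : IsUnit (gram ℝ w + ((n : ℝ) * ε) • (1 : Matrix (Fin n) (Fin n) ℝ)) :=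
    (posDef_gram_add_smul_one w (by positivity)).isUnit
  have hinv := smul_frameOperator_add_smul_id_sum_smul_inv_mulVec w hn' hA
  have hspan : Submodule.span ℝ (Set.range w) ≤ LinearMap.range T := fun ψ hψ => by
    obtain ⟨c, rfl⟩ := (Submodule.mem_span_range_iff_exists_fun ℝ).mp hψ
    exact ⟨_, hinv c⟩
  refine ⟨hA, hT ▸ ⟨?_, ?_⟩, hT ▸ hinv⟩
  · refine injective_add_smul_id_of_inner_self_nonneg _ (fun φ => ?_) hε
    simpa [real_inner_smul_left] using
      mul_nonneg (inv_nonneg.mpr n.cast_nonneg) (inner_frameOperator_self_nonneg w φ)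
  · refine surjective_add_smul_id_of_range_le _ hε.ne' ?_
    exact (LinearMap.range_smul_le_range _ _).trans ((range_frameOperator_le_span w).trans hspan)
end

section
/- Let H_X and H_Y be real Hilbert spaces, w_1, …, w_n ∈ H_X with Gram matrix k, u_1, …, u_n ∈ H_Y, and ε > 0. Let D := Ĉ_YY − Ĉ_YX ∘ (Ĉ_XX + ε·Id)^{-1} ∘ Ĉ_XY be the regularized empirical conditional covariance operator on H_Y. Then D is positive: for every φ ∈ H_Y, writing b ∈ ℝ^n for the vector with b_p = ⟨u_p, φ⟩, one has ⟨D φ, φ⟩ = ε · bᵀ (k + nε·I_n)^{-1} b ≥ 0. -/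
/-!
Write `b p = ⟪u p, φ⟫`, `ψ = (Ĉ_XX + ε)⁻¹ Ĉ_XY φ` and `a p = ⟪w p, ψ⟫`. Pairing the defining
equation of `ψ` with each `w i` turns it into the linear system `(k + nε) a = k b`, so that
`b - a = nε (k + nε)⁻¹ b`. On the other hand `⟪D φ, φ⟫ = (b - a) ⬝ b / n`, which gives the
formula; it is nonnegative because `k` is a Gram matrix, hence `k + nε` is positive definite.
-/

open scoped RealInnerProductSpace
open Matrix

namespace Matrix

variable {ι : Type*} [Fintype ι]

theorem sub_eq_smul_inv_mulVec_of_add_smul_one_mulVec_eq [DecidableEq ι] {R : Type*}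
    [CommRing R] {K : Matrix ι ι R} {c : R} (hK : IsUnit (K + c • 1)) {a b : ι → R}
    (h : (K + c • 1) *ᵥ a = K *ᵥ b) :
    b - a = c • (K + c • 1)⁻¹ *ᵥ b := by
  let := hK.invertible
  rw [← mulVec_smul]
  refine (inv_mulVec_eq_vec ?_).symm
  rw [mulVec_sub, h, add_mulVec, smul_mulVec, one_mulVec]
  abel

theorem gram_mulVec_apply {𝕜 E : Type*} [RCLike 𝕜] [SeminormedAddCommGroup E]
    [InnerProductSpace 𝕜 E] (v : ι → E) (c : ι → 𝕜) (i : ι) :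
    (gram 𝕜 v *ᵥ c) i = inner 𝕜 (v i) (∑ j, c j • v j) := by
  simp only [mulVec, dotProduct, gram_apply, inner_sum, inner_smul_right, mul_comm]

end Matrix

section CoefficientSystem

variable {ι E : Type*} [Fintype ι] [SeminormedAddCommGroup E]
  [InnerProductSpace ℝ E]

theorem inner_sum_smul_left_eq_dotProduct (c : ι → ℝ) (u : ι → E) (φ : E) :
    ⟪∑ p, c p • u p, φ⟫ = c ⬝ᵥ fun p => ⟪u p, φ⟫ := by
  simp only [sum_inner, real_inner_smul_left, dotProduct]

theorem gram_add_smul_one_mulVec_inner_eq [DecidableEq ι] {w : ι → E} {ψ : E} {b : ι → ℝ}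
    {s ε : ℝ} (hs : s ≠ 0)
    (h : (1 / s) • ∑ p, ⟪w p, ψ⟫ • w p + ε • ψ = (1 / s) • ∑ p, b p • w p) :
    (gram ℝ w + (s * ε) • 1) *ᵥ (fun p => ⟪w p, ψ⟫) = gram ℝ w *ᵥ b := by
  funext i
  have hi := congrArg (fun x => ⟪w i, x⟫) h
  simp only [inner_add_right, real_inner_smul_right, ← gram_mulVec_apply] at hi
  rw [add_mulVec, smul_mulVec, one_mulVec, Pi.add_apply, Pi.smul_apply, smul_eq_mul]
  field_simp at hi
  linarith

end CoefficientSystem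

theorem conditional_covariance_positive_general
    {HX HY : Type*} [NormedAddCommGroup HX] [InnerProductSpace ℝ HX]
    [NormedAddCommGroup HY] [InnerProductSpace ℝ HY]
    (n : ℕ) (hn : 0 < n) (w : Fin n → HX) (u : Fin n → HY)
    (k : Matrix (Fin n) (Fin n) ℝ) (hk : ∀ i j, k i j = ⟪w i, w j⟫)
    (ε : ℝ) (hε : 0 < ε)
    -- `R` is the inverse of the regularized covariance operator `Ĉ_XX + ε Id`:
    (R : HX → HX)
    (hR1 : ∀ φ : HX, ((1 / (n : ℝ)) • ∑ p, ⟪w p, R φ⟫ • w p) + ε • R φ = φ)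
    -- `D = Ĉ_YY − Ĉ_YX ∘ R ∘ Ĉ_XY`:
    (D : HY → HY)
    (hD : ∀ φ : HY,
      D φ = (1 / (n : ℝ)) • ∑ p, ⟪u p, φ⟫ • u p
        - (1 / (n : ℝ)) •
            ∑ p, ⟪w p, R ((1 / (n : ℝ)) • ∑ q, ⟪u q, φ⟫ • w q)⟫ • u p) :
    ∀ φ : HY,
      ⟪D φ, φ⟫ = ε * ((fun q => ⟪u q, φ⟫) ⬝ᵥ
          (k + ((n : ℝ) * ε) • 1)⁻¹.mulVec fun q => ⟪u q, φ⟫) ∧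
      0 ≤ ⟪D φ, φ⟫ := by
  intro φ
  set b : Fin n → ℝ := fun q => ⟪u q, φ⟫
  set a : Fin n → ℝ := fun p => ⟪w p, R ((1 / (n : ℝ)) • ∑ q, b q • w q)⟫
  have hn' : (n : ℝ) ≠ 0 := Nat.cast_ne_zero.2 hn.ne'
  have hkw : k = gram ℝ w := Matrix.ext hk
  have hM : (k + ((n : ℝ) * ε) • 1).PosDef :=
    hkw ▸ PosDef.posSemidef_add (posSemidef_gram ℝ w) (PosDef.one.smul (by positivity))
  have hba : b - a = ((n : ℝ) * ε) • (k + ((n : ℝ) * ε) • 1)⁻¹ *ᵥ b := by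
    refine sub_eq_smul_inv_mulVec_of_add_smul_one_mulVec_eq hM.isUnit ?_
    rw [hkw]
    exact gram_add_smul_one_mulVec_inner_eq hn' (hR1 _)
  have hDφ : ⟪D φ, φ⟫ = (1 / (n : ℝ)) * ((b - a) ⬝ᵥ b) := by
    rw [hD, inner_sub_left, real_inner_smul_left, real_inner_smul_left,
      inner_sum_smul_left_eq_dotProduct, inner_sum_smul_left_eq_dotProduct, sub_dotProduct,
      mul_sub]
  have hformula : ⟪D φ, φ⟫ = ε * (b ⬝ᵥ (k + ((n : ℝ) * ε) • 1)⁻¹ *ᵥ b) := by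
    rw [hDφ, hba, smul_dotProduct, dotProduct_comm, smul_eq_mul]
    field_simp
  refine ⟨hformula, hformula ▸ mul_nonneg hε.le ?_⟩
  simpa using hM.inv.posSemidef.dotProduct_mulVec_nonneg b

/-- The regularized empirical conditional covariance operator
`D = Ĉ_YY − Ĉ_YX ∘ (Ĉ_XX + ε Id)⁻¹ ∘ Ĉ_XY` is positive:
`⟪D φ, φ⟫ = ε bᵀ (k + nε Iₙ)⁻¹ b ≥ 0` where `b = (⟪uₚ, φ⟫)ₚ`. -/
theorem conditional_covariance_positive
    {HX HY : Type*} [NormedAddCommGroup HX] [InnerProductSpace ℝ HX]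
    [NormedAddCommGroup HY] [InnerProductSpace ℝ HY]
    (n : ℕ) (hn : 0 < n) (w : Fin n → HX) (u : Fin n → HY)
    (k : Matrix (Fin n) (Fin n) ℝ) (hk : ∀ i j, k i j = ⟪w i, w j⟫)
    (ε : ℝ) (hε : 0 < ε)
    -- `R` is the inverse of the regularized covariance operator `Ĉ_XX + ε Id`:
    (R : HX → HX)
    (hR1 : ∀ φ : HX, ((1 / (n : ℝ)) • ∑ p, ⟪w p, R φ⟫ • w p) + ε • R φ = φ)
    (hR2 : ∀ φ : HX, R (((1 / (n : ℝ)) • ∑ p, ⟪w p, φ⟫ • w p) + ε • φ) = φ)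
    -- `D = Ĉ_YY − Ĉ_YX ∘ R ∘ Ĉ_XY`:
    (D : HY → HY)
    (hD : ∀ φ : HY,
      D φ = (1 / (n : ℝ)) • ∑ p, ⟪u p, φ⟫ • u p
        - (1 / (n : ℝ)) •
            ∑ p, ⟪w p, R ((1 / (n : ℝ)) • ∑ q, ⟪u q, φ⟫ • w q)⟫ • u p) :
    ∀ φ : HY,
      ⟪D φ, φ⟫ = ε * ((fun q => ⟪u q, φ⟫) ⬝ᵥ
          (k + ((n : ℝ) * ε) • 1)⁻¹.mulVec fun q => ⟪u q, φ⟫) ∧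
      0 ≤ ⟪D φ, φ⟫ :=
  conditional_covariance_positive_general n hn w u k hk ε hε R hR1 D hD
end

section
/- Let H be a real Hilbert space, C : H → H a continuous linear operator that is self-adjoint and positive, and k ∈ ℝ^{n×n} a symmetric positive semidefinite matrix. On the Hilbert space H^n (with inner product ⟨ψ, φ⟩ = Σ_{i=1}^n ⟨ψ_i, φ_i⟩), define the block operator A by (Aψ)_i = Σ_{j=1}^n k_{ij} C ψ_j. Then A is a continuous, self-adjoint, positive linear operator on H^n, and consequently, for every λ > 0 the operator A + λ·Id is bijective; in particular, for every u ∈ H^n the system Σ_{j=1}^n k_{ij} C h_j + λ h_i = u_i (i = 1, …, n) has a unique solution h ∈ H^n. -/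
/-!
Writing `k = Bᵀ B` (e.g. with `B = √k`) gives
`⟪A ψ, ψ⟫ = ∑ₗ ⟪C (∑ⱼ B l j • ψ j), ∑ⱼ B l j • ψ j⟫ ≥ 0`, and self-adjointness is the symmetry of
`k` and of `C`. Positivity of `A` makes `(ψ, φ) ↦ ⟪A ψ + λ ψ, φ⟫` coercive for `λ > 0`, so
`A + λ • id` is bijective by Lax–Milgram.
-/

open scoped RealInnerProductSpace BigOperators
open Matrix

section BlockOperator

variable {𝕜 : Type*} [NormedField 𝕜] {ι : Type*} [Fintype ι]
  {E : Type*} [SeminormedAddCommGroup E] [NormedSpace 𝕜 E]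

noncomputable def blockOperator (k : Matrix ι ι 𝕜) (C : E →L[𝕜] E) :
    PiLp 2 (fun _ : ι => E) →L[𝕜] PiLp 2 (fun _ : ι => E) :=
  (PiLp.continuousLinearEquiv 2 𝕜 (fun _ : ι => E)).symm.toContinuousLinearMap ∘L
    ContinuousLinearMap.pi (fun i => ∑ j, k i j • C ∘L ContinuousLinearMap.proj j) ∘L
    (PiLp.continuousLinearEquiv 2 𝕜 (fun _ : ι => E)).toContinuousLinearMap

@[simp]
theorem blockOperator_apply (k : Matrix ι ι 𝕜) (C : E →L[𝕜] E) (ψ : PiLp 2 fun _ : ι => E)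
    (i : ι) : blockOperator k C ψ i = ∑ j, k i j • C (ψ j) := by
  simp [blockOperator]

end BlockOperator

theorem Matrix.PosSemidef.exists_eq_conjTranspose_mul_self {ι : Type*} [Fintype ι]
    [DecidableEq ι] {k : Matrix ι ι ℝ} (hk : k.PosSemidef) : ∃ B : Matrix ι ι ℝ, k = Bᴴ * B := by
  open scoped MatrixOrder in
  exact ⟨CFC.sqrt k, by
    rw [← star_eq_conjTranspose, (CFC.sqrt_nonneg k).isSelfAdjoint.star_eq,
      CFC.sqrt_mul_sqrt_self k hk.nonneg]⟩

theorem bijective_add_smul_of_inner_nonneg {E : Type*} [NormedAddCommGroup E]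
    [InnerProductSpace ℝ E] [CompleteSpace E] {T : E →L[ℝ] E} (hT : ∀ x, 0 ≤ ⟪T x, x⟫) {c : ℝ}
    (hc : 0 < c) : Function.Bijective fun x => T x + c • x := by
  set S := T + c • ContinuousLinearMap.id ℝ E
  have hS : IsCoercive ((innerSL ℝ).comp S) := by
    refine ⟨c, hc, fun x => ?_⟩
    change c * ‖x‖ * ‖x‖ ≤ ⟪T x + c • x, x⟫
    rw [inner_add_left, real_inner_smul_left, real_inner_self_eq_norm_mul_norm]
    linarith [hT x]
  have hS_eq : ⇑hS.continuousLinearEquivOfBilin = fun x => T x + c • x :=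
    funext fun x => (hS.unique_continuousLinearEquivOfBilin fun _ => rfl).symm
  exact hS_eq ▸ hS.continuousLinearEquivOfBilin.bijective

section RealBlockOperator

variable {ι : Type*} [Fintype ι] {H : Type*} [NormedAddCommGroup H] [InnerProductSpace ℝ H]

theorem inner_blockOperator_left (k : Matrix ι ι ℝ) (C : H →L[ℝ] H)
    (ψ φ : PiLp 2 fun _ : ι => H) :
    ⟪blockOperator k C ψ, φ⟫ = ∑ i, ∑ j, k i j * ⟪C (ψ j), φ i⟫ := by
  simp [PiLp.inner_apply, sum_inner, real_inner_smul_left]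

theorem isSymmetric_blockOperator {k : Matrix ι ι ℝ} (hk : k.IsSymm) {C : H →L[ℝ] H}
    (hC : C.IsSymmetric) : (blockOperator k C).IsSymmetric := by
  intro ψ φ
  rw [ContinuousLinearMap.coe_coe, real_inner_comm _ ψ, inner_blockOperator_left,
    inner_blockOperator_left, Finset.sum_comm]
  refine Finset.sum_congr rfl fun i _ => Finset.sum_congr rfl fun j _ => ?_
  rw [hk.apply, hC.apply_clm, real_inner_comm]

theorem inner_blockOperator_conjTranspose_mul_self (B : Matrix ι ι ℝ) (C : H →L[ℝ] H)
    (ψ : PiLp 2 fun _ : ι => H) :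
    ⟪blockOperator (Bᴴ * B) C ψ, ψ⟫ = ∑ l, ⟪C (∑ j, B l j • ψ j), ∑ i, B l i • ψ i⟫ := by
  simp only [inner_blockOperator_left, mul_apply, conjTranspose_apply, star_trivial, map_sum,
    map_smul, sum_inner, inner_sum, real_inner_smul_left, real_inner_smul_right, Finset.sum_mul]
  refine (Finset.sum_congr rfl fun i _ => Finset.sum_comm).trans (Finset.sum_comm.trans ?_)
  simp only [mul_assoc]

theorem inner_blockOperator_self_nonneg {k : Matrix ι ι ℝ} (hk : k.PosSemidef) {C : H →L[ℝ] H}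
    (hC : ∀ x, 0 ≤ ⟪C x, x⟫) (ψ : PiLp 2 fun _ : ι => H) : 0 ≤ ⟪blockOperator k C ψ, ψ⟫ := by
  classical
  obtain ⟨B, rfl⟩ := hk.exists_eq_conjTranspose_mul_self
  rw [inner_blockOperator_conjTranspose_mul_self]
  exact Finset.sum_nonneg fun l _ => hC _

theorem existsUnique_blockOperator_add_smul_eq {k : Matrix ι ι ℝ} {C : H →L[ℝ] H} {c : ℝ}
    (hbij : Function.Bijective fun ψ => blockOperator k C ψ + c • ψ) (u : ι → H) :
    ∃! h : ι → H, ∀ i, ∑ j, k i j • C (h j) + c • h i = u i := by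
  refine ((WithLp.equiv 2 (ι → H)).symm.existsUnique_congr fun h => ?_).mpr
    (hbij.existsUnique (WithLp.toLp 2 u))
  simp [PiLp.ext_iff]

end RealBlockOperator

/-- For a self-adjoint positive continuous linear operator `C` on a
real Hilbert space `H` and a symmetric positive semidefinite matrix `k`, the block
operator `(Aψ)ᵢ = Σⱼ kᵢⱼ C ψⱼ` on `Hⁿ` is a continuous, self-adjoint, positive
linear operator; consequently for every `λ > 0` the operator `A + λ Id` is
bijective, and the system `Σⱼ kᵢⱼ C hⱼ + λ hᵢ = uᵢ` has a unique solution. -/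
theorem block_operator_selfAdjoint_positive_and_system_unique_solution
    {H : Type*} [NormedAddCommGroup H] [InnerProductSpace ℝ H] [CompleteSpace H]
    (n : ℕ) (C : H →L[ℝ] H)
    (hself : ∀ φ ψ : H, ⟪C φ, ψ⟫ = ⟪φ, C ψ⟫)
    (hpos : ∀ φ : H, 0 ≤ ⟪C φ, φ⟫)
    (k : Matrix (Fin n) (Fin n) ℝ) (hsym : k.IsSymm)
    (hpsd : ∀ c : Fin n → ℝ, 0 ≤ c ⬝ᵥ k.mulVec c) :
    ∃ A : PiLp 2 (fun _ : Fin n => H) →L[ℝ] PiLp 2 (fun _ : Fin n => H),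
      (∀ (ψ : PiLp 2 fun _ : Fin n => H) (i : Fin n), A ψ i = ∑ j, k i j • C (ψ j)) ∧
      (∀ ψ φ : PiLp 2 fun _ : Fin n => H, ⟪A ψ, φ⟫ = ⟪ψ, A φ⟫) ∧
      (∀ ψ : PiLp 2 fun _ : Fin n => H, 0 ≤ ⟪A ψ, ψ⟫) ∧
      ∀ lam : ℝ, 0 < lam →
        Function.Bijective (fun ψ : PiLp 2 fun _ : Fin n => H => A ψ + lam • ψ) ∧
        ∀ u : Fin n → H, ∃! h : Fin n → H,
          ∀ i, (∑ j, k i j • C (h j)) + lam • h i = u i := by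
  have hk : k.PosSemidef :=
    .of_dotProduct_mulVec_nonneg (isHermitian_iff_isSymm.mpr hsym) fun c => by
      simpa using hpsd c
  have hA_nonneg := inner_blockOperator_self_nonneg hk hpos
  refine ⟨blockOperator k C, blockOperator_apply k C, isSymmetric_blockOperator hsym hself,
    hA_nonneg, fun lam hlam => ?_⟩
  have hbij := bijective_add_smul_of_inner_nonneg hA_nonneg hlam
  exact ⟨hbij, existsUnique_blockOperator_add_smul_eq hbij⟩
end

section
/- Let G be a real Hilbert space, K : G → G a continuous linear operator that is self-adjoint and positive, λ > 0, and Φ ∈ G. Then K + λ·Id is bijective, and Ψ* := (K + λ·Id)^{-1} Φ is a global minimizer over G of the regularized risk J(Ψ) := ‖KΨ − Φ‖² + λ ⟨KΨ, Ψ⟩; that is, J(Ψ*) ≤ J(Ψ) for all Ψ ∈ G. -/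
/-!
Writing `Ψ = Ψ* + Δ` and using the self-adjointness of `K`, the risk expands as
`J(Ψ* + Δ) = J(Ψ*) + 2 ⟪KΨ* + λΨ* - Φ, KΔ⟫ + ‖KΔ‖² + λ ⟪KΔ, Δ⟫`.
The normal equation `KΨ* + λΨ* = Φ` kills the cross term and positivity of `K` makes the rest
nonnegative. Bijectivity of `K + λ Id` is Lax–Milgram: `⟪KΨ + λΨ, Ψ⟫ ≥ λ ‖Ψ‖²`.
-/

open scoped RealInnerProductSpace

section

variable {G : Type*} [NormedAddCommGroup G] [InnerProductSpace ℝ G]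

theorem bijective_of_coercive_inner [CompleteSpace G] (T : G →L[ℝ] G) {c : ℝ} (hc : 0 < c)
    (hT : ∀ u, c * ‖u‖ ^ 2 ≤ ⟪T u, u⟫) : Function.Bijective T := by
  have hB : IsCoercive ((innerSL ℝ).comp T) :=
    ⟨c, hc, fun u => by simpa [sq, mul_assoc] using hT u⟩
  have hT_eq : ⇑T = hB.continuousLinearEquivOfBilin := funext fun v =>
    hB.unique_continuousLinearEquivOfBilin fun w => rfl
  rw [hT_eq]
  exact hB.continuousLinearEquivOfBilin.bijective

def ridgeRisk (K : G →L[ℝ] G) (lam : ℝ) (Φ Ψ : G) : ℝ :=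
  ‖K Ψ - Φ‖ ^ 2 + lam * ⟪K Ψ, Ψ⟫

theorem ridgeRisk_add {K : G →L[ℝ] G} (hself : ∀ Ψ Φ : G, ⟪K Ψ, Φ⟫ = ⟪Ψ, K Φ⟫)
    (lam : ℝ) (Φ Ψ Δ : G) :
    ridgeRisk K lam Φ (Ψ + Δ) =
      ridgeRisk K lam Φ Ψ + 2 * ⟪K Ψ + lam • Ψ - Φ, K Δ⟫ + (‖K Δ‖ ^ 2 + lam * ⟪K Δ, Δ⟫) := by
  have hsplit : K (Ψ + Δ) - Φ = (K Ψ - Φ) + K Δ := by rw [map_add]; abel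
  unfold ridgeRisk
  rw [hsplit, norm_add_sq_real, map_add]
  simp only [inner_add_left, inner_add_right, inner_sub_left, real_inner_smul_left]
  rw [hself Ψ Δ, real_inner_comm (K Δ) Ψ]
  ring

theorem ridgeRisk_le_of_normal_equation {K : G →L[ℝ] G}
    (hself : ∀ Ψ Φ : G, ⟪K Ψ, Φ⟫ = ⟪Ψ, K Φ⟫) (hpos : ∀ Ψ : G, 0 ≤ ⟪K Ψ, Ψ⟫)
    {lam : ℝ} (hlam : 0 ≤ lam) {Φ Ψstar : G} (hΨstar : K Ψstar + lam • Ψstar = Φ) (Ψ : G) :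
    ridgeRisk K lam Φ Ψstar ≤ ridgeRisk K lam Φ Ψ := by
  have hexpand := ridgeRisk_add hself lam Φ Ψstar (Ψ - Ψstar)
  rw [add_sub_cancel, hΨstar, sub_self, inner_zero_left, mul_zero, add_zero] at hexpand
  rw [hexpand]
  have := mul_nonneg hlam (hpos (Ψ - Ψstar))
  nlinarith [sq_nonneg ‖K (Ψ - Ψstar)‖]

end

/-- For a self-adjoint positive continuous linear operator `K` on a real
Hilbert space `G` and `λ > 0`, the operator `K + λ Id` is bijective and
`Ψ* = (K + λ Id)⁻¹ Φ` is a global minimizer of the regularized risk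
`J(Ψ) = ‖KΨ − Φ‖² + λ ⟪KΨ, Ψ⟫`. -/
theorem ridge_regression_representer_solution_minimizes
    {G : Type*} [NormedAddCommGroup G] [InnerProductSpace ℝ G] [CompleteSpace G]
    (K : G →L[ℝ] G)
    (hself : ∀ Ψ Φ : G, ⟪K Ψ, Φ⟫ = ⟪Ψ, K Φ⟫)
    (hpos : ∀ Ψ : G, 0 ≤ ⟪K Ψ, Ψ⟫)
    (lam : ℝ) (hlam : 0 < lam) (Φ : G) :
    Function.Bijective (fun Ψ : G => K Ψ + lam • Ψ) ∧
    ∀ Ψstar : G, K Ψstar + lam • Ψstar = Φ →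
      ∀ Ψ : G,
        ‖K Ψstar - Φ‖ ^ 2 + lam * ⟪K Ψstar, Ψstar⟫
          ≤ ‖K Ψ - Φ‖ ^ 2 + lam * ⟪K Ψ, Ψ⟫ := by
  refine ⟨?_, fun Ψstar hΨstar Ψ =>
    ridgeRisk_le_of_normal_equation hself hpos hlam.le hΨstar Ψ⟩
  have hcoercive : ∀ u, lam * ‖u‖ ^ 2 ≤ ⟪(K + lam • ContinuousLinearMap.id ℝ G) u, u⟫ := by
    intro u
    simp only [add_apply, smul_apply,
      ContinuousLinearMap.id_apply, inner_add_left, real_inner_smul_left, real_inner_self_eq_norm_sq]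
    linarith [hpos u]
  exact bijective_of_coercive_inner _ hlam hcoercive
end

section
/- (Proposition 1, covariance case.) Let H be a real Hilbert space, u_1, …, u_n ∈ H with Gram matrix L (L_{ij} = ⟨u_i, u_j⟩), Ĉ the empirical covariance operator associated with u_1, …, u_n, k ∈ ℝ^{n×n} a symmetric positive semidefinite matrix, and λ > 0. Then the matrix k ⊗ L + nλ I_{n²} is invertible, and if h_1, …, h_n ∈ H satisfy Σ_{j=1}^n k_{ij} Ĉ h_j + λ h_i = u_i for all i = 1, …, n, then for every a ∈ ℝ^n and every v ∈ H, ⟨Σ_{i=1}^n a_i Ĉ h_i, v⟩ = bᵀ (aᵀ ⊗ L)(k ⊗ L + nλ I_{n²})^{-1} vec(I_n), where b ∈ ℝ^n has entries b_i = ⟨u_i, v⟩ and aᵀ ⊗ L denotes the n × n² matrix obtained as the Kronecker product of the row vector aᵀ with L. -/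
/-!
Pairing the ridge system with the `uₚ` turns it into the matrix equation
`L X kᵀ + nλ X = n L` for `X = (⟪uₚ, hⱼ⟫)ₚⱼ`, i.e. `M vec X = n vec L` with
`M = k ⊗ L + nλ I`, which is positive definite since `k ⊗ L` is positive semidefinite.
As `vec L = (I ⊗ L) vec I` and `I ⊗ L` commutes with `M`, the matrix `W` with
`vec W = M⁻¹ vec I` satisfies `n L W = X`. Both sides of the identity are then `(1/n) bᵀ X a`.
-/

open scoped RealInnerProductSpace BigOperators Kronecker
open Matrix

/-- `vecStack A` is the vectorization of the matrix `A` obtained by stacking its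
columns: the entry of `vecStack A` at index `(j, i)` (column `j`, row `i`) is `A i j`. -/
def vecStack {m p : Type*} {α : Type*} (A : Matrix p m α) : m × p → α :=
  fun x => A x.2 x.1

open scoped ComplexOrder

namespace Matrix

section Kronecker

variable {l m n R : Type*} [Fintype m] [Fintype n] [CommRing R]

theorem commute_one_kronecker_kronecker_add_smul_one [DecidableEq m] [DecidableEq n]
    (A : Matrix m m R) (B : Matrix n n R) (c : R) :
    Commute (1 ⊗ₖ B) (A ⊗ₖ B + c • 1) := by
  refine Commute.add_right ?_ ((Commute.one_right _).smul_right c)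
  change (1 ⊗ₖ B) * (A ⊗ₖ B) = (A ⊗ₖ B) * (1 ⊗ₖ B)
  rw [← mul_kronecker_mul, ← mul_kronecker_mul, one_mul, mul_one]

theorem smul_mul_eq_of_mulVec_vec [DecidableEq n] {B W X : Matrix n n R}
    {M : Matrix (n × n) (n × n) R} (hM : IsUnit M) (hcomm : Commute (1 ⊗ₖ B) M) {c : R}
    (hW : M *ᵥ vec W = vec 1) (hX : M *ᵥ vec X = c • vec B) :
    c • (B * W) = X := by
  refine vec_inj.mp (mulVec_injective_of_isUnit hM ?_)
  rw [hX, vec_smul, mulVec_smul, vec_mul_eq_mulVec, mulVec_mulVec, ← hcomm.eq,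
    ← mulVec_mulVec, hW, ← vec_mul_eq_mulVec, mul_one]

theorem of_kroneckerRow_mulVec_vec (a : n → R) (B : Matrix l m R) (W : Matrix m n R) :
    (of fun p (jq : n × m) => a jq.1 * B p jq.2) *ᵥ vec W = (B * W) *ᵥ a := by
  ext p
  simp only [mulVec, dotProduct, Fintype.sum_prod_type, of_apply, vec, mul_apply,
    Finset.sum_mul]
  exact Finset.sum_congr rfl fun _ _ => Finset.sum_congr rfl fun _ _ => by ring

end Kronecker

theorem PosSemidef.kronecker_add_smul_one_posDef {m n 𝕜 : Type*} [Fintype m] [Fintype n]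
    [DecidableEq m] [DecidableEq n] [RCLike 𝕜] {A : Matrix m m 𝕜} {B : Matrix n n 𝕜}
    (hA : A.PosSemidef) (hB : B.PosSemidef) {c : ℝ} (hc : 0 < c) :
    (A ⊗ₖ B + c • 1).PosDef :=
  PosDef.posSemidef_add (hA.kronecker hB) (PosDef.one.smul hc)

end Matrix

section Covariance

variable {ι κ H : Type*} [Fintype ι] [NormedAddCommGroup H] [InnerProductSpace ℝ H]

def crossGram (u : ι → H) (h : κ → H) : Matrix ι κ ℝ := Matrix.of fun p j => ⟪u p, h j⟫

variable {u : ι → H} {C : H → H} {c : ℝ}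

theorem inner_covariance_right (hC : ∀ φ, C φ = c • ∑ p, ⟪u p, φ⟫ • u p) (w φ : H) :
    ⟪w, C φ⟫ = c * ∑ p, ⟪w, u p⟫ * ⟪u p, φ⟫ := by
  simp only [hC, inner_smul_right, inner_sum, mul_comm]

theorem gram_mul_crossGram_mul_transpose_add
    (hC : ∀ φ, C φ = c • ∑ p, ⟪u p, φ⟫ • u p) (k : Matrix ι ι ℝ) (lam : ℝ) {h : ι → H}
    (hridge : ∀ i, ∑ j, k i j • C (h j) + lam • h i = u i) :
    c • (Matrix.gram ℝ u * crossGram u h * kᵀ) + lam • crossGram u h = Matrix.gram ℝ u := by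
  ext q i
  have := congrArg (⟪u q, ·⟫) (hridge i)
  simp only [inner_add_right, inner_sum, real_inner_smul_right, inner_covariance_right hC] at this
  simp only [Matrix.add_apply, Matrix.smul_apply, Matrix.mul_apply, Matrix.transpose_apply,
    crossGram, Matrix.gram_apply, Matrix.of_apply, smul_eq_mul, ← this]
  simp only [Finset.mul_sum, Finset.sum_mul]
  congr 1
  exact Finset.sum_congr rfl fun _ _ => Finset.sum_congr rfl fun _ _ => by ring

theorem inner_sum_smul_covariance (hC : ∀ φ, C φ = c • ∑ p, ⟪u p, φ⟫ • u p) (a : ι → ℝ)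
    (h : ι → H) (v : H) :
    ⟪∑ i, a i • C (h i), v⟫ = c * ((fun p => ⟪u p, v⟫) ⬝ᵥ crossGram u h *ᵥ a) := by
  simp only [real_inner_comm v, inner_sum, real_inner_smul_right, inner_covariance_right hC,
    dotProduct, Matrix.mulVec, crossGram, Matrix.of_apply, Finset.mul_sum]
  rw [Finset.sum_comm]
  exact Finset.sum_congr rfl fun _ _ => Finset.sum_congr rfl fun _ _ => by ring

end Covariance

/-- Proposition 1, covariance case: with `Ĉ` the empirical covariance
operator of `u₁, …, uₙ`, Gram matrix `L`, and `k` symmetric psd, the matrix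
`k ⊗ L + nλ I_{n²}` is invertible, and any solution `h` of the ridge system
`Σⱼ kᵢⱼ Ĉ hⱼ + λ hᵢ = uᵢ` satisfies, for all `a ∈ ℝⁿ` and `v ∈ H`,
`⟪Σᵢ aᵢ Ĉ hᵢ, v⟫ = bᵀ (aᵀ ⊗ L)(k ⊗ L + nλ I_{n²})⁻¹ vec(Iₙ)` with `bᵢ = ⟪uᵢ, v⟫`. -/
theorem proposition1_covariance_case
    {H : Type*} [NormedAddCommGroup H] [InnerProductSpace ℝ H]
    (n : ℕ) (hn : 0 < n) (u : Fin n → H)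
    (L : Matrix (Fin n) (Fin n) ℝ) (hL : ∀ i j, L i j = ⟪u i, u j⟫)
    (C : H → H)
    (hC : ∀ φ : H, C φ = (1 / (n : ℝ)) • ∑ p, ⟪u p, φ⟫ • u p)
    (k : Matrix (Fin n) (Fin n) ℝ) (hsym : k.IsSymm)
    (hpsd : ∀ c : Fin n → ℝ, 0 ≤ c ⬝ᵥ k.mulVec c)
    (lam : ℝ) (hlam : 0 < lam) :
    IsUnit (k ⊗ₖ L + ((n : ℝ) * lam) • (1 : Matrix (Fin n × Fin n) (Fin n × Fin n) ℝ)) ∧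
    ∀ h : Fin n → H,
      (∀ i, (∑ j, k i j • C (h j)) + lam • h i = u i) →
      ∀ (a : Fin n → ℝ) (v : H),
        ⟪∑ i, a i • C (h i), v⟫
          = (fun i => ⟪u i, v⟫) ⬝ᵥ
              (Matrix.of fun (p : Fin n) (jq : Fin n × Fin n) => a jq.1 * L p jq.2).mulVec
                ((k ⊗ₖ L + ((n : ℝ) * lam) • 1)⁻¹.mulVec
                  (vecStack (1 : Matrix (Fin n) (Fin n) ℝ))) := by
  obtain rfl : L = gram ℝ u := Matrix.ext hL
  have hn' : (n : ℝ) ≠ 0 := by positivity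
  have hk : k.PosSemidef :=
    .of_dotProduct_mulVec_nonneg (isHermitian_iff_isSymm.mpr hsym) (by simpa using hpsd)
  set M := k ⊗ₖ gram ℝ u + ((n : ℝ) * lam) • (1 : Matrix (Fin n × Fin n) (Fin n × Fin n) ℝ)
  have hM : M.PosDef := hk.kronecker_add_smul_one_posDef (posSemidef_gram ℝ u) (by positivity)
  refine ⟨hM.isUnit, fun h hridge a v => ?_⟩
  set W : Matrix (Fin n) (Fin n) ℝ := of fun q j => (M⁻¹ *ᵥ vec 1) (j, q)
  have hW : M *ᵥ vec W = vec 1 := by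
    change M *ᵥ (M⁻¹ *ᵥ vec 1) = _
    rw [mulVec_mulVec, mul_nonsing_inv _ ((isUnit_iff_isUnit_det M).mp hM.isUnit), one_mulVec]
  have hX : M *ᵥ vec (crossGram u h) = (n : ℝ) • vec (gram ℝ u) := by
    rw [add_mulVec, kronecker_mulVec_vec, smul_mulVec, one_mulVec, ← vec_smul, ← vec_add,
      ← vec_smul]
    conv_rhs => rw [← gram_mul_crossGram_mul_transpose_add hC k lam hridge]
    rw [smul_add, smul_smul, mul_one_div_cancel hn', one_smul, smul_smul]
  have hLW : (n : ℝ) • (gram ℝ u * W) = crossGram u h :=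
    smul_mul_eq_of_mulVec_vec hM.isUnit (commute_one_kronecker_kronecker_add_smul_one _ _ _) hW hX
  -- `vecStack` is `Matrix.vec`, and `M⁻¹ *ᵥ vec 1` is `vec W` by construction of `W`.
  change _ = _ ⬝ᵥ _ *ᵥ vec W
  rw [of_kroneckerRow_mulVec_vec, inner_sum_smul_covariance hC, ← hLW, smul_mulVec,
    dotProduct_smul, smul_eq_mul, ← mul_assoc, one_div_mul_cancel hn', one_mul]
end

section
/- Let U ∈ ℝ^{n×m₁}, V ∈ ℝ^{n×m₂}, λ > 0, and set k := U Uᵀ and L := V Vᵀ. Then both matrices k ⊗ L + nλ I_{n²} and nλ I_{m₁m₂} + UᵀU ⊗ VᵀV are invertible, and (k ⊗ L + nλ I_{n²})^{-1} vec(I_n) = (1/(nλ)) ( vec(I_n) − (U ⊗ V)(nλ I_{m₁m₂} + UᵀU ⊗ VᵀV)^{-1} vec(Vᵀ U) ). -/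
open scoped BigOperators Kronecker
open Matrix

private lemma smul_one_posDef {p : Type*} [Fintype p] [DecidableEq p] {c : ℝ} (hc : 0 < c) :
    ((c • (1 : Matrix p p ℝ))).PosDef := by
  rw [Matrix.smul_one_eq_diagonal]
  exact Matrix.posDef_diagonal_iff.mpr fun _ => hc

private lemma woodbury_aux {p q : Type*} [Fintype p] [Fintype q] [DecidableEq p] [DecidableEq q]
    (W : Matrix p q ℝ) (c : ℝ) (hc : 0 < c) :
    IsUnit (W * Wᵀ + c • (1 : Matrix p p ℝ)) ∧
    IsUnit (c • (1 : Matrix q q ℝ) + Wᵀ * W) ∧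
    (W * Wᵀ + c • (1 : Matrix p p ℝ))⁻¹
      = (1 / c) • (1 - W * (c • (1 : Matrix q q ℝ) + Wᵀ * W)⁻¹ * Wᵀ) := by
  have hWWt : (W * Wᵀ).PosSemidef := by
    simpa using Matrix.posSemidef_self_mul_conjTranspose W
  have hWtW : (Wᵀ * W).PosSemidef := by
    simpa using Matrix.posSemidef_conjTranspose_mul_self W
  have hA : (W * Wᵀ + c • (1 : Matrix p p ℝ)).PosDef :=
    Matrix.PosDef.posSemidef_add hWWt (smul_one_posDef hc)
  have hB : (c • (1 : Matrix q q ℝ) + Wᵀ * W).PosDef :=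
    (smul_one_posDef hc).add_posSemidef hWtW
  refine ⟨hA.isUnit, hB.isUnit, ?_⟩
  set B := c • (1 : Matrix q q ℝ) + Wᵀ * W with hBdef
  have hBB : B * B⁻¹ = 1 :=
    Matrix.mul_nonsing_inv _ ((Matrix.isUnit_iff_isUnit_det _).mp hB.isUnit)
  refine Matrix.inv_eq_right_inv ?_
  have key : (W * Wᵀ + c • 1) * W = W * B := by
    rw [hBdef]
    rw [Matrix.add_mul, Matrix.mul_add, Matrix.smul_mul, Matrix.one_mul,
      Matrix.mul_smul, Matrix.mul_one, Matrix.mul_assoc]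
    rw [add_comm]
  calc (W * Wᵀ + c • 1) * ((1 / c) • (1 - W * B⁻¹ * Wᵀ))
      = (1 / c) • ((W * Wᵀ + c • 1) * (1 - W * B⁻¹ * Wᵀ)) := by
        rw [Matrix.mul_smul]
    _ = (1 / c) • ((W * Wᵀ + c • 1) - (W * Wᵀ + c • 1) * W * (B⁻¹ * Wᵀ)) := by
        rw [Matrix.mul_sub, Matrix.mul_one, Matrix.mul_assoc, Matrix.mul_assoc]
    _ = (1 / c) • ((W * Wᵀ + c • 1) - W * Wᵀ) := by
        rw [key, Matrix.mul_assoc, ← Matrix.mul_assoc B, hBB, Matrix.one_mul]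
    _ = 1 := by
        rw [add_sub_cancel_left, smul_smul, one_div, inv_mul_cancel₀ hc.ne', one_smul]

/-- With `k = UUᵀ`, `L = VVᵀ` (incomplete Cholesky factors) and `λ > 0`,
both `k ⊗ L + nλ I_{n²}` and `nλ I_{m₁m₂} + UᵀU ⊗ VᵀV` are invertible, and
`(k ⊗ L + nλ I_{n²})⁻¹ vec(Iₙ)
  = (1/(nλ)) (vec(Iₙ) − (U ⊗ V)(nλ I_{m₁m₂} + UᵀU ⊗ VᵀV)⁻¹ vec(VᵀU))`. -/
theorem woodbury_kronecker_preimage_inverse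
    (n m₁ m₂ : ℕ) (hn : 0 < n)
    (U : Matrix (Fin n) (Fin m₁) ℝ) (V : Matrix (Fin n) (Fin m₂) ℝ)
    (lam : ℝ) (hlam : 0 < lam) :
    IsUnit ((U * Uᵀ) ⊗ₖ (V * Vᵀ)
        + ((n : ℝ) * lam) • (1 : Matrix (Fin n × Fin n) (Fin n × Fin n) ℝ)) ∧
    IsUnit (((n : ℝ) * lam) • (1 : Matrix (Fin m₁ × Fin m₂) (Fin m₁ × Fin m₂) ℝ)
        + (Uᵀ * U) ⊗ₖ (Vᵀ * V)) ∧
    ((U * Uᵀ) ⊗ₖ (V * Vᵀ) + ((n : ℝ) * lam) • 1)⁻¹.mulVec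
        (vecStack (1 : Matrix (Fin n) (Fin n) ℝ))
      = (1 / ((n : ℝ) * lam)) •
          (vecStack (1 : Matrix (Fin n) (Fin n) ℝ)
            - (U ⊗ₖ V).mulVec
                ((((n : ℝ) * lam) • 1 + (Uᵀ * U) ⊗ₖ (Vᵀ * V))⁻¹.mulVec
                  (vecStack (Vᵀ * U)))) := by
  set c : ℝ := (n : ℝ) * lam with hcdef
  have hc : 0 < c := by positivity
  set W : Matrix (Fin n × Fin n) (Fin m₁ × Fin m₂) ℝ := U ⊗ₖ V with hWdef
  have hWt : Wᵀ = Uᵀ ⊗ₖ Vᵀ := (Matrix.kroneckerMap_transpose _ U V).symm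
  have h1 : (U * Uᵀ) ⊗ₖ (V * Vᵀ) = W * Wᵀ := by
    rw [Matrix.mul_kronecker_mul, hWt]
  have h2 : (Uᵀ * U) ⊗ₖ (Vᵀ * V) = Wᵀ * W := by
    rw [Matrix.mul_kronecker_mul, hWt]
  obtain ⟨hA, hB, hinv⟩ := woodbury_aux W c hc
  rw [h1, h2]
  refine ⟨hA, hB, ?_⟩
  have hvec : Wᵀ.mulVec (vecStack (1 : Matrix (Fin n) (Fin n) ℝ)) = vecStack (Vᵀ * U) := by
    ext ⟨a, b⟩
    simp only [hWt, Matrix.mulVec, dotProduct, vecStack, Matrix.mul_apply,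
      Matrix.kroneckerMap_apply, Matrix.transpose_apply, Fintype.sum_prod_type,
      Matrix.one_apply]
    simp only [mul_ite, mul_one, mul_zero, Finset.sum_ite_eq, Finset.sum_ite_eq',
      Finset.mem_univ, if_true]
    exact Finset.sum_congr rfl fun i _ => by
      simp [hWdef, Matrix.kroneckerMap_apply]; ring
  rw [hinv]
  rw [Matrix.smul_mulVec, Matrix.sub_mulVec, Matrix.one_mulVec,
    ← Matrix.mulVec_mulVec, ← Matrix.mulVec_mulVec, hvec]
end
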